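/- Let f : U → V be a map in the set-up and let X be a finite union of puzzle pieces which is nice. Then for every z ∈ D(X) ∖ X: every w ∈ L_z(X) satisfies w ∈ D(X) ∖ X and L_w(X) = L_z(X); and every w′ ∈ D(X) ∖ X with w′ ∉ L_z(X) satisfies L_{w′}(X) ∩ L_z(X) = ∅. -/

import Mathlib

open Set Function Topology

noncomputable section

/-- A (bounded) Jordan domain in the plane: a bounded connected open set whose
frontier is a Jordan curve, i.e. an injective continuous image of the circle. -/
def IsJordanDomain (Ω : Set ℂ) : Prop :=
  IsOpen Ω ∧ IsConnected Ω ∧ Bornology.IsBounded Ω ∧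
  ∃ g : Metric.sphere (0:ℂ) 1 → ℂ, Continuous g ∧ Function.Injective g ∧
    Set.range g = frontier Ω

/-- `A` is strictly contained in `X`: it is a proper subset of some connected
component of `X`. -/
def StrictlyContainedIn (A X : Set ℂ) : Prop :=
  ∃ x ∈ X, A ⊂ connectedComponentIn X x

/-- The set-up: `V ⊆ ℂ` is open with finitely many components, each a bounded Jordan
domain, with pairwise disjoint closures; `U` is open with closure contained in `V`,
with finitely many components with pairwise disjoint closures; `f : U → V` is proper
holomorphic; every critical point of `f` lies in `K_f`. -/
structure Setup where
  U : Set ℂ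
  V : Set ℂ
  f : ℂ → ℂ
  hV_open : IsOpen V
  hV_comp_finite : {C : Set ℂ | ∃ x ∈ V, C = connectedComponentIn V x}.Finite
  hV_jordan : ∀ x ∈ V, IsJordanDomain (connectedComponentIn V x)
  hV_disj : ∀ x ∈ V, ∀ y ∈ V, connectedComponentIn V x ≠ connectedComponentIn V y →
    closure (connectedComponentIn V x) ∩ closure (connectedComponentIn V y) = ∅
  hU_open : IsOpen U
  hUV : closure U ⊆ V
  hU_comp_finite : {C : Set ℂ | ∃ x ∈ U, C = connectedComponentIn U x}.Finite
  hU_disj : ∀ x ∈ U, ∀ y ∈ U, connectedComponentIn U x ≠ connectedComponentIn U y →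
    closure (connectedComponentIn U x) ∩ closure (connectedComponentIn U y) = ∅
  hf_maps : Set.MapsTo f U V
  hf_holo : DifferentiableOn ℂ f U
  hf_proper : ∀ K ⊆ V, IsCompact K → IsCompact (U ∩ f ⁻¹' K)
  hf_crit : ∀ z ∈ U, deriv f z = 0 → ∀ n : ℕ, f^[n] z ∈ U

namespace Setup

variable (S : Setup)

/-- `K_f = {z ∈ U : f^n(z) ∈ U for all n}`. -/
def K : Set ℂ := {z | z ∈ S.U ∧ ∀ n : ℕ, S.f^[n] z ∈ S.U}

/-- The set of critical points of `f`. -/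
def Crit : Set ℂ := {z | z ∈ S.U ∧ deriv S.f z = 0}

/-- `preV n = f^{-n}(V)`, preimages being taken for the partial map `f : U → V`. -/
def preV : ℕ → Set ℂ
  | 0 => S.V
  | n+1 => S.U ∩ S.f ⁻¹' (preV n)

/-- `P` is a puzzle piece of depth `n`: a connected component of `f^{-n}(V)`. -/
def IsPieceOfDepth (n : ℕ) (P : Set ℂ) : Prop :=
  ∃ x ∈ S.preV n, P = connectedComponentIn (S.preV n) x

/-- `P` is a puzzle piece. -/
def IsPiece (P : Set ℂ) : Prop := ∃ n, S.IsPieceOfDepth n P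

/-- `piece n x = P_n(x)`, the puzzle piece of depth `n` containing `x`. -/
def piece (n : ℕ) (x : ℂ) : Set ℂ := connectedComponentIn (S.preV n) x

/-- `X` is a finite union of puzzle pieces. -/
def IsPieceUnion (X : Set ℂ) : Prop :=
  ∃ P : Set (Set ℂ), P.Finite ∧ (∀ Q ∈ P, S.IsPiece Q) ∧ X = ⋃₀ P

/-- `X` is nice: for every connected component `P` of `X` and every `n ≥ 1`,
`f^n(P)` is not strictly contained in `X`. -/
def Nice (X : Set ℂ) : Prop :=
  ∀ x ∈ X, ∀ n : ℕ, 1 ≤ n →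
    ¬ StrictlyContainedIn (S.f^[n] '' connectedComponentIn X x) X

/-- `preIm X n = f^{-n}(X)`, preimages being taken for the partial map `f : U → V`. -/
def preIm (X : Set ℂ) : ℕ → Set ℂ
  | 0 => X
  | n+1 => S.U ∩ S.f ⁻¹' (preIm X n)

/-- `D(X) = ⋃_{k ≥ 0} f^{-k}(X)`. -/
def D (X : Set ℂ) : Set ℂ := ⋃ k, S.preIm X k

/-- For `z ∈ D(X) ∖ X`, `k` is the landing time `k(z)`: the minimal positive
integer with `f^k(z) ∈ X`. -/
def IsLandingTime (X : Set ℂ) (z : ℂ) (k : ℕ) : Prop :=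
  1 ≤ k ∧ S.f^[k] z ∈ X ∧ ∀ j, 1 ≤ j → j < k → S.f^[j] z ∉ X

/-- `landComp X z k = Comp_z(f^{-k}(Comp_{f^k(z)}(X)))`; for `k = k(z)` this is
`L_z(X)`. -/
def landComp (X : Set ℂ) (z : ℂ) (k : ℕ) : Set ℂ :=
  connectedComponentIn (S.preIm (connectedComponentIn X (S.f^[k] z)) k) z

/-- `x` combinatorially accumulates to `y`: for every `n ≥ 0` there is `j ≥ 1`
with `f^j(x) ∈ P_n(y)`. -/
def Acc (x y : ℂ) : Prop := ∀ n : ℕ, ∃ j : ℕ, 1 ≤ j ∧ S.f^[j] x ∈ S.piece n y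

/-- `Forw(x) = {y ∈ K_f : x → y}`. -/
def Forw (x : ℂ) : Set ℂ := {y | y ∈ S.K ∧ S.Acc x y}

/-- The equivalence `c1 ∼ c2` on critical points. -/
def Equiv (c1 c2 : ℂ) : Prop := c1 = c2 ∨ (S.Acc c1 c2 ∧ S.Acc c2 c1)

/-- The class `[c]` of a critical point `c`. -/
def cls (c : ℂ) : Set ℂ := {c' | c' ∈ S.Crit ∧ S.Equiv c c'}

/-- `D(f) = Crit(f)/∼`, the set of equivalence classes. -/
def classes : Set (Set ℂ) := {A | ∃ c ∈ S.Crit, A = S.cls c}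

/-- `[c1] → [c2]`. -/
def ClassAcc (A B : Set ℂ) : Prop := ∃ c1 ∈ A, ∃ c2 ∈ B, S.Acc c1 c2

/-- The partial order on classes: `A ≤ B` iff `A = B` or `B → A`. -/
def ClassLe (A B : Set ℂ) : Prop := A = B ∨ S.ClassAcc B A

/-- The minimal elements of a family of classes w.r.t. `ClassLe`. -/
def minimalsIn (T : Set (Set ℂ)) : Set (Set ℂ) :=
  {A | A ∈ T ∧ ∀ B ∈ T, S.ClassLe B A → B = A}

/-- Auxiliary: `(D_k(f), D_0(f) ∪ ⋯ ∪ D_k(f))`. -/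
def DlevelAux : ℕ → Set (Set ℂ) × Set (Set ℂ)
  | 0 => (S.minimalsIn S.classes, S.minimalsIn S.classes)
  | k+1 =>
      (S.minimalsIn (S.classes \ (DlevelAux k).2),
        (DlevelAux k).2 ∪ S.minimalsIn (S.classes \ (DlevelAux k).2))

/-- `Dlevel k = D_k(f)`. -/
def Dlevel (k : ℕ) : Set (Set ℂ) := (S.DlevelAux k).1

/-- Each connected component of `V` contains at most one critical point. -/
def OneCritPerComp : Prop :=
  ∀ c ∈ S.Crit, ∀ c' ∈ S.Crit,
    connectedComponentIn S.V c = connectedComponentIn S.V c' → c = c'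

/-- Assumption (∗∗): if `c` does not combinatorially accumulate to `c'`, then
`f^j(c) ∉ P_0(c')` for all `j ≥ 1`. -/
def StarStar : Prop :=
  ∀ c ∈ S.Crit, ∀ c' ∈ S.Crit, ¬ S.Acc c c' →
    ∀ j : ℕ, 1 ≤ j → S.f^[j] c ∉ S.piece 0 c'

/-- `K_f(x)`, the connected component of `K_f` containing `x`. -/
def Kcomp (x : ℂ) : Set ℂ := connectedComponentIn S.K x

/-- `P_{n+k}(c1)` is a child of `P_n(c2)`: `f^k(P_{n+k}(c1)) = P_n(c2)` and
`f^{k-1}` maps `P_{n+k-1}(f(c1))` conformally onto `P_n(c2)`. -/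
def IsChild (c1 : ℂ) (k : ℕ) (n : ℕ) (c2 : ℂ) : Prop :=
  1 ≤ k ∧ S.f^[k] '' S.piece (n+k) c1 = S.piece n c2 ∧
  Set.InjOn (S.f^[k-1]) (S.piece (n+k-1) (S.f c1)) ∧
  S.f^[k-1] '' S.piece (n+k-1) (S.f c1) = S.piece n c2

/-- `c` is persistently recurrent: for every `n ≥ 0` and every `c' ∈ [c]`,
`P_n(c')` has only finitely many children. -/
def PersistentlyRecurrent (c : ℂ) : Prop :=
  ∀ n : ℕ, ∀ c' ∈ S.cls c,
    {Q : Set ℂ | ∃ c1 ∈ S.cls c, ∃ k : ℕ, S.IsChild c1 k n c' ∧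
      Q = S.piece (n+k) c1}.Finite

/-- `Crit_n(f)`. -/
def CritN : Set ℂ := {c | c ∈ S.Crit ∧ ∀ c' ∈ S.Crit, ¬ S.Acc c c'}

/-- `Crit_e(f)`. -/
def CritE : Set ℂ := {c | c ∈ S.Crit ∧ ¬ S.Acc c c ∧ ∃ c' ∈ S.Crit, S.Acc c c'}

/-- `Crit_r(f)`. -/
def CritR : Set ℂ := {c | c ∈ S.Crit ∧ S.Acc c c ∧ ¬ S.PersistentlyRecurrent c}

/-- `Crit_p(f)`. -/
def CritP : Set ℂ := {c | c ∈ S.Crit ∧ S.Acc c c ∧ S.PersistentlyRecurrent c}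

end Setup


/-!
Write `C` for the component of `X` containing `f^k(z)` and `L = L_z(X)`. Since the components of
a finite union of puzzle pieces are puzzle pieces, `C = P_m(f^k(z))`. If some `w ∈ L` returned to
`X` at a time `j < k`, let `P` be the component of `X` containing `f^j(w)`. The connected set
`f^j(L)` lies in the piece `Q = P_{m+k-j}(f^j(w))`, which contains `f^j(z) ∉ X`; hence `P` is a
deeper piece than `Q`, so `closure P ⊆ Q` by properness, and `f^{k-j}` maps the compact set
`closure P` into the open set `C`. Then `f^{k-j}(P) ⊊ C`, because a nonempty open subset of `ℂ`
is never compact, contradicting niceness. So `k` is also the landing time of every `w ∈ L`,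
and `L_w(X) = L`; disjointness of distinct `L`'s follows.
-/

section Topology

variable {α β : Type*} [TopologicalSpace α] [TopologicalSpace β]

theorem IsOpen.not_isCompact [T2Space α] [PreconnectedSpace α] [NoncompactSpace α] {s : Set α}
    (hs : IsOpen s) (hne : s.Nonempty) : ¬ IsCompact s := fun hc =>
  noncompact_univ α (IsClopen.eq_univ ⟨hc.isClosed, hs⟩ hne ▸ hc)

theorem image_ssubset_of_mapsTo_closure [T2Space β] [PreconnectedSpace β] [NoncompactSpace β]
    {g : α → β} {P : Set α} {C : Set β} (hP : IsCompact (closure P))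
    (hg : ContinuousOn g (closure P)) (hmaps : MapsTo g (closure P) C) (hC : IsOpen C)
    (hne : C.Nonempty) : g '' P ⊂ C := by
  refine ⟨(image_mono subset_closure).trans hmaps.image_subset, fun hCP => ?_⟩
  have himage : g '' closure P = C :=
    hmaps.image_subset.antisymm (hCP.trans (image_mono subset_closure))
  exact hC.not_isCompact hne (himage ▸ hP.image_of_continuousOn hg)

theorem exists_mem_connectedComponentIn_sUnion_eq {𝒮 : Set (Set α)} (hfin : 𝒮.Finite)
    (hopen : ∀ Q ∈ 𝒮, IsOpen Q) (hconn : ∀ Q ∈ 𝒮, IsPreconnected Q)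
    (hnested : ∀ Q ∈ 𝒮, ∀ Q' ∈ 𝒮, (Q ∩ Q').Nonempty → Q ⊆ Q' ∨ Q' ⊆ Q)
    {y : α} (hy : y ∈ ⋃₀ 𝒮) : ∃ M ∈ 𝒮, connectedComponentIn (⋃₀ 𝒮) y = M := by
  obtain ⟨Q₀, hQ₀, hyQ₀⟩ := hy
  obtain ⟨M, ⟨hM, hyM⟩, hmax⟩ :=
    (hfin.subset (sep_subset 𝒮 (y ∈ ·))).exists_maximal ⟨Q₀, hQ₀, hyQ₀⟩
  have hsub : ∀ Q ∈ 𝒮, ¬ Disjoint Q M → Q ⊆ M := by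
    intro Q hQ hQM
    rcases hnested Q hQ M hM (not_disjoint_iff_nonempty_inter.mp hQM) with h | h
    · exact h
    · exact hmax ⟨hQ, h hyM⟩ h
  have hcover : ⋃₀ 𝒮 ⊆ M ∪ ⋃₀ {Q ∈ 𝒮 | Disjoint Q M} := by
    rintro x ⟨Q, hQ, hxQ⟩
    by_cases hQM : Disjoint Q M
    · exact Or.inr ⟨Q, ⟨hQ, hQM⟩, hxQ⟩
    · exact Or.inl (hsub Q hQ hQM hxQ)
  refine ⟨M, hM, subset_antisymm ?_ ((hconn M hM).subset_connectedComponentIn hyM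
    (subset_sUnion_of_mem hM))⟩
  exact isPreconnected_connectedComponentIn.subset_left_of_subset_union (hopen M hM)
    (isOpen_sUnion fun Q hQ => hopen Q hQ.1) (disjoint_sUnion_right.mpr fun Q hQ => hQ.2.symm)
    ((connectedComponentIn_subset _ _).trans hcover)
    ⟨y, mem_connectedComponentIn ⟨Q₀, hQ₀, hyQ₀⟩, hyM⟩

end Topology

namespace Setup

variable (S : Setup) {A B X : Set ℂ} {m n k : ℕ} {x z w : ℂ}

theorem preIm_add (A : Set ℂ) (n m : ℕ) : S.preIm (S.preIm A n) m = S.preIm A (n + m) := by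
  induction m with
  | zero => rfl
  | succ m ih => simp only [preIm, ih]; rfl

theorem preIm_mono (h : A ⊆ B) (n : ℕ) : S.preIm A n ⊆ S.preIm B n := by
  induction n with
  | zero => exact h
  | succ n ih => exact inter_subset_inter_right _ (preimage_mono ih)

theorem isOpen_preIm (hA : IsOpen A) (n : ℕ) : IsOpen (S.preIm A n) := by
  induction n with
  | zero => exact hA
  | succ n ih => exact S.hf_holo.continuousOn.isOpen_inter_preimage S.hU_open ih

theorem mapsTo_iterate_preIm (A : Set ℂ) (n : ℕ) : MapsTo (S.f^[n]) (S.preIm A n) A := by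
  induction n with
  | zero => exact mapsTo_id A
  | succ n ih => exact fun x hx => ih hx.2

theorem continuousOn_iterate_preIm (A : Set ℂ) (n : ℕ) :
    ContinuousOn (S.f^[n]) (S.preIm A n) := by
  induction n generalizing A with
  | zero => exact continuousOn_id
  | succ n ih =>
    exact (ih A).comp (S.hf_holo.continuousOn.mono inter_subset_left) fun _ hx => hx.2

theorem preIm_inter_preimage_iterate_subset (A B : Set ℂ) (n : ℕ) :
    S.preIm A n ∩ S.f^[n] ⁻¹' B ⊆ S.preIm B n := by
  induction n with
  | zero => exact inter_subset_right
  | succ n ih => exact fun x ⟨hx, hxB⟩ => ⟨hx.1, ih ⟨hx.2, hxB⟩⟩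

theorem preV_eq_preIm (n : ℕ) : S.preV n = S.preIm S.V n := by
  induction n with
  | zero => rfl
  | succ n ih => simp only [preV, preIm, ih]

theorem preV_add (n m : ℕ) : S.preV (n + m) = S.preIm (S.preV n) m := by
  rw [preV_eq_preIm, preV_eq_preIm, preIm_add]

theorem preV_antitone : Antitone S.preV := by
  refine antitone_nat_of_succ_le fun n => ?_
  induction n with
  | zero => exact inter_subset_left.trans (subset_closure.trans S.hUV)
  | succ n ih => exact inter_subset_inter_right _ (preimage_mono ih)

theorem isOpen_preV (n : ℕ) : IsOpen (S.preV n) := by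
  rw [preV_eq_preIm]
  exact S.isOpen_preIm S.hV_open n

theorem isBounded_V : Bornology.IsBounded S.V := by
  refine (Bornology.isBounded_sUnion S.hV_comp_finite).mpr ?_ |>.subset fun x hx =>
    ⟨_, ⟨x, hx, rfl⟩, mem_connectedComponentIn hx⟩
  rintro _ ⟨x, hx, rfl⟩
  exact (S.hV_jordan x hx).2.2.1

theorem piece_subset_preV : S.piece n x ⊆ S.preV n :=
  connectedComponentIn_subset _ _

theorem piece_subset_piece (h : m ≤ n) : S.piece n x ⊆ S.piece m x :=
  connectedComponentIn_mono x (S.preV_antitone h)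

theorem isBounded_piece (n : ℕ) (x : ℂ) : Bornology.IsBounded (S.piece n x) :=
  S.isBounded_V.subset (S.piece_subset_preV.trans (S.preV_antitone n.zero_le))

theorem preIm_piece_subset_preV : S.preIm (S.piece n x) m ⊆ S.preV (n + m) :=
  S.preV_add n m ▸ S.preIm_mono S.piece_subset_preV m

theorem mapsTo_iterate_piece (n m : ℕ) (x : ℂ) :
    MapsTo (S.f^[m]) (S.piece (n + m) x) (S.piece n (S.f^[m] x)) := by
  by_cases hx : x ∈ S.preV (n + m)
  · have hcont : ContinuousOn (S.f^[m]) (S.piece (n + m) x) :=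
      (S.preV_add n m ▸ S.continuousOn_iterate_preIm _ m).mono S.piece_subset_preV
    refine mapsTo_iff_image_subset.mpr <|
      (isPreconnected_connectedComponentIn.image _ hcont).subset_connectedComponentIn
        (mem_image_of_mem _ (mem_connectedComponentIn hx)) ?_
    exact (S.preV_add n m ▸ S.mapsTo_iterate_preIm _ m).mono_left S.piece_subset_preV
      |>.image_subset
  · simp only [piece, connectedComponentIn_eq_empty hx, mapsTo_empty]

theorem closure_piece_succ_subset_preV (n : ℕ) (x : ℂ) :
    closure (S.piece (n + 1) x) ⊆ S.preV n := by
  induction n generalizing x with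
  | zero =>
    exact closure_mono (S.piece_subset_preV.trans inter_subset_left) |>.trans S.hUV
  | succ n ih =>
    set K := closure (S.piece (n + 1) (S.f x))
    have hK : IsCompact K := (S.isBounded_piece _ _).isCompact_closure
    have hclosed : IsClosed (S.U ∩ S.f ⁻¹' K) :=
      (S.hf_proper K ((ih _).trans (S.preV_antitone n.zero_le)) hK).isClosed
    have hpiece : S.piece (n + 2) x ⊆ S.U ∩ S.f ⁻¹' K := fun y hy =>
      ⟨(S.piece_subset_preV hy).1, subset_closure (S.mapsTo_iterate_piece (n + 1) 1 x hy)⟩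
    exact (closure_minimal hpiece hclosed).trans (inter_subset_inter_right _ (preimage_mono (ih _)))

theorem closure_piece_subset_piece (h : m < n) : closure (S.piece n x) ⊆ S.piece m x := by
  obtain ⟨n, rfl⟩ : ∃ n', n = n' + 1 := ⟨n - 1, by omega⟩
  by_cases hx : x ∈ S.preV (n + 1)
  · exact isPreconnected_connectedComponentIn.closure.subset_connectedComponentIn
      (subset_closure (mem_connectedComponentIn hx))
      ((S.closure_piece_succ_subset_preV n x).trans (S.preV_antitone (by omega)))
  · simp only [piece, connectedComponentIn_eq_empty hx, closure_empty, empty_subset]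

theorem IsPiece.eq_piece {P : Set ℂ} (hP : S.IsPiece P) (hx : x ∈ P) :
    ∃ n, P = S.piece n x := by
  obtain ⟨n, y, -, rfl⟩ := hP
  exact ⟨n, connectedComponentIn_eq hx⟩

theorem IsPiece.nested {P Q : Set ℂ} (hP : S.IsPiece P) (hQ : S.IsPiece Q)
    (hPQ : (P ∩ Q).Nonempty) : P ⊆ Q ∨ Q ⊆ P := by
  obtain ⟨x, hxP, hxQ⟩ := hPQ
  obtain ⟨m, rfl⟩ := hP.eq_piece S hxP
  obtain ⟨n, rfl⟩ := hQ.eq_piece S hxQ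
  rcases le_total m n with h | h
  · exact Or.inr (S.piece_subset_piece h)
  · exact Or.inl (S.piece_subset_piece h)

theorem exists_connectedComponentIn_eq_piece (hX : S.IsPieceUnion X) (hx : x ∈ X) :
    ∃ n, connectedComponentIn X x = S.piece n x := by
  obtain ⟨𝒮, hfin, h𝒮, rfl⟩ := hX
  obtain ⟨M, hM, hxM⟩ := exists_mem_connectedComponentIn_sUnion_eq hfin
    (fun Q hQ => by obtain ⟨n, y, -, rfl⟩ := h𝒮 Q hQ; exact (S.isOpen_preV n).connectedComponentIn)
    (fun Q hQ => by obtain ⟨n, y, -, rfl⟩ := h𝒮 Q hQ; exact isPreconnected_connectedComponentIn)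
    (fun Q hQ Q' hQ' => (h𝒮 Q hQ).nested S (h𝒮 Q' hQ')) hx
  rw [hxM]
  exact (h𝒮 M hM).eq_piece S (hxM ▸ mem_connectedComponentIn hx)

theorem IsLandingTime.unique (h : S.IsLandingTime X x k) (h' : S.IsLandingTime X x m) :
    k = m := by
  by_contra hne
  rcases lt_or_gt_of_ne hne with hlt | hlt
  · exact h'.2.2 k h.1 hlt h.2.1
  · exact h.2.2 m h'.1 hlt h'.2.1

theorem iterate_notMem_of_lt (hz : z ∈ S.D X \ X) (hk : S.IsLandingTime X z k) {j : ℕ}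
    (hj : j < k) : S.f^[j] z ∉ X := by
  rcases j.eq_zero_or_pos with rfl | hj₀
  · exact hz.2
  · exact hk.2.2 j hj₀ hj

theorem mem_landComp_self (hz : z ∈ S.D X \ X) (hk : S.IsLandingTime X z k) :
    z ∈ S.landComp X z k := by
  obtain ⟨m, hm⟩ := mem_iUnion.mp hz.1
  obtain ⟨d, rfl⟩ : ∃ d, m = d + k := by
    refine ⟨m - k, (Nat.sub_add_cancel (not_lt.mp fun hmk => ?_)).symm⟩
    exact S.iterate_notMem_of_lt hz hk hmk (S.mapsTo_iterate_preIm X m hm)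
  rw [← preIm_add] at hm
  exact mem_connectedComponentIn <|
    S.preIm_inter_preimage_iterate_subset _ _ k ⟨hm, mem_connectedComponentIn hk.2.1⟩

theorem landComp_subset_preIm : S.landComp X z k ⊆ S.preIm X k :=
  (connectedComponentIn_subset _ _).trans (S.preIm_mono (connectedComponentIn_subset _ _) k)

theorem iterate_mem_of_mem_landComp (hw : w ∈ S.landComp X z k) :
    S.f^[k] w ∈ connectedComponentIn X (S.f^[k] z) :=
  S.mapsTo_iterate_preIm _ k (connectedComponentIn_subset _ _ hw)

theorem landComp_eq_of_mem (hw : w ∈ S.landComp X z k) :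
    S.landComp X w k = S.landComp X z k := by
  rw [landComp, landComp, ← connectedComponentIn_eq (S.iterate_mem_of_mem_landComp hw),
    ← connectedComponentIn_eq hw]

theorem iterate_notMem_of_mem_landComp (hX : S.IsPieceUnion X) (hnice : S.Nice X)
    (hz : z ∈ S.D X \ X) (hk : S.IsLandingTime X z k) (hw : w ∈ S.landComp X z k) {j : ℕ}
    (hj : j < k) : S.f^[j] w ∉ X := by
  intro hjX
  obtain ⟨r, rfl⟩ : ∃ r, k = r + j := ⟨k - j, by omega⟩
  obtain ⟨m, hC⟩ := S.exists_connectedComponentIn_eq_piece hX hk.2.1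
  obtain ⟨p, hP⟩ := S.exists_connectedComponentIn_eq_piece hX hjX
  have hL : S.landComp X z (r + j) ⊆ S.preIm (S.preIm (S.piece m (S.f^[r + j] z)) r) j := by
    rw [preIm_add, ← hC]
    exact connectedComponentIn_subset _ _
  have hzQ : S.f^[j] z ∈ S.piece (m + r) (S.f^[j] w) := by
    refine (isPreconnected_connectedComponentIn.image _
      ((S.continuousOn_iterate_preIm _ j).mono hL)).subset_connectedComponentIn
      (mem_image_of_mem _ hw) ?_ (mem_image_of_mem _ (S.mem_landComp_self hz hk))
    exact ((S.mapsTo_iterate_preIm _ j).mono_left hL).image_subset.trans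
      S.preIm_piece_subset_preV
  have hdeeper : m + r < p := by
    refine not_le.mp fun hp => S.iterate_notMem_of_lt hz hk (by omega) ?_
    exact connectedComponentIn_subset X _ (hP ▸ S.piece_subset_piece hp hzQ)
  have hclosure := S.closure_piece_subset_piece (x := S.f^[j] w) hdeeper
  have hmaps : MapsTo (S.f^[r]) (closure (S.piece p (S.f^[j] w)))
      (connectedComponentIn X (S.f^[r + j] z)) := by
    have hwC := hC ▸ S.iterate_mem_of_mem_landComp hw
    rw [hC, show S.piece m (S.f^[r + j] z) = S.piece m (S.f^[r + j] w) from
      connectedComponentIn_eq hwC, iterate_add_apply]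
    exact (S.mapsTo_iterate_piece m r _).mono_left hclosure
  refine hnice _ hjX r (by omega) ⟨_, hk.2.1, hP ▸ image_ssubset_of_mapsTo_closure
    (S.isBounded_piece _ _).isCompact_closure ?_ hmaps ?_ ⟨_, mem_connectedComponentIn hk.2.1⟩⟩
  · exact (S.preV_add m r ▸ S.continuousOn_iterate_preIm _ r).mono
      (hclosure.trans S.piece_subset_preV)
  · exact hC ▸ (S.isOpen_preV m).connectedComponentIn

theorem isLandingTime_of_mem_landComp (hX : S.IsPieceUnion X) (hnice : S.Nice X)
    (hz : z ∈ S.D X \ X) (hk : S.IsLandingTime X z k) (hw : w ∈ S.landComp X z k) :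
    S.IsLandingTime X w k :=
  ⟨hk.1, connectedComponentIn_subset _ _ (S.iterate_mem_of_mem_landComp hw),
    fun _ _ hj => S.iterate_notMem_of_mem_landComp hX hnice hz hk hw hj⟩

end Setup

/-- For a map in the set-up and a nice finite union `X` of puzzle
pieces, for every `z ∈ D(X) ∖ X`: every `w ∈ L_z(X)` lies in `D(X) ∖ X` and
satisfies `L_w(X) = L_z(X)`, and every `w' ∈ D(X) ∖ X` outside `L_z(X)`
satisfies `L_{w'}(X) ∩ L_z(X) = ∅`. -/
theorem stmt_3 (S : Setup) (X : Set ℂ) (hX : S.IsPieceUnion X) (hnice : S.Nice X)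
    (z : ℂ) (hz : z ∈ S.D X \ X) (k : ℕ) (hk : S.IsLandingTime X z k) :
    (∀ w ∈ S.landComp X z k, w ∈ S.D X \ X ∧
      ∀ k' : ℕ, S.IsLandingTime X w k' → S.landComp X w k' = S.landComp X z k) ∧
    (∀ w' ∈ S.D X \ X, w' ∉ S.landComp X z k →
      ∀ k' : ℕ, S.IsLandingTime X w' k' →
        S.landComp X w' k' ∩ S.landComp X z k = ∅) := by
  have landing : ∀ w ∈ S.landComp X z k, S.IsLandingTime X w k := fun _ hw =>
    S.isLandingTime_of_mem_landComp hX hnice hz hk hw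
  refine ⟨fun w hw => ⟨⟨mem_iUnion_of_mem k (S.landComp_subset_preIm hw),
    S.iterate_notMem_of_mem_landComp hX hnice hz hk hw hk.1⟩, fun k' hk' => ?_⟩, ?_⟩
  · rw [hk'.unique S (landing w hw)]
    exact S.landComp_eq_of_mem hw
  · intro w' hw' hw'L k' hk'
    refine eq_empty_of_forall_notMem fun u ⟨huw', huz⟩ => hw'L ?_
    obtain rfl : k' = k :=
      (S.isLandingTime_of_mem_landComp hX hnice hw' hk' huw').unique S (landing u huz)
    rw [← S.landComp_eq_of_mem huz, S.landComp_eq_of_mem huw']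
    exact S.mem_landComp_self hw' hk'
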